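/- arXiv:2404.13703 — 2 statements merged into one kernel-verified Lean document; each statement's English description precedes it below -/
import Mathlib

section
/- Suppose Q ∈ C¹([0,T)×[0,1]) and N : [0,T) → (0,∞) satisfy ∂_τQ(τ,η) + ∂_ηQ(τ,η) = 1/N(τ) + K(Q(τ,η)) for τ ∈ (0,T), η ∈ (0,1), and Q(τ,0) = 0 for τ ∈ [0,T), with initial datum Q(0,·) = Q_init nondecreasing on [0,1]. Then (i) for every τ ∈ [0,T) the function η ↦ Q(τ,η) is nondecreasing on [0,1], and (ii) ∂_ηQ(τ,0) = 1/N(τ) + K(0) for all τ ∈ [0,T). If in addition 1/N(τ) = ∂_ηQ(τ,1) − K(Φ_F) holds for all τ ∈ [0,T), then ∂_ηQ(τ,1) − ∂_ηQ(τ,0) = K(Φ_F) − K(0) for all τ ∈ [0,T). -/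
/-!
Along a characteristic `u ↦ (u, u + c)` the equation reads `d/du Q = 1/N + K(Q)`. Since
`1/N + K(0) > 0`, the value of `Q` along a characteristic cannot cross `0` downwards, so `Q ≥ 0`.
The difference of `Q` along two characteristics satisfies `|d'| ≤ Lip(K) |d|`, so by Grönwall it
cannot change sign; it is nonnegative where the characteristics enter the strip (on the initial
line by monotonicity of `Q_init`, on the boundary `η = 0` because `Q ≥ 0 = Q(·, 0)`), hence
everywhere. Finally the equation extends to `η = 0` by continuity, where the boundary condition
kills `∂_τ Q`.
-/

open Real Set MeasureTheory Filter Topology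
open scoped ENNReal

noncomputable section

/-- The time interval `[0, T)` in `ℝ`, where `T : ℝ≥0∞` may be `∞`. -/
def Ico0 (T : ℝ≥0∞) : Set ℝ := {τ : ℝ | 0 ≤ τ ∧ ENNReal.ofReal τ < T}

/-- Partial derivative in the time variable (one-sided at `τ = 0`). -/
def pdTau (Q : ℝ → ℝ → ℝ) (τ η : ℝ) : ℝ := derivWithin (fun s => Q s η) (Ici 0) τ

/-- Partial derivative in the spatial variable (one-sided at `η = 0` and `η = 1`). -/
def pdEta (Q : ℝ → ℝ → ℝ) (τ η : ℝ) : ℝ := derivWithin (fun x => Q τ x) (Icc 0 1) η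

/-- Assumption 1.1: `K ∈ C²(ℝ)` with `K'`, `K''` bounded on `ℝ` and `K > 0` on `[0, Φ_F]`. -/
structure KAssump (K : ℝ → ℝ) (ΦF : ℝ) : Prop where
  smooth : ContDiff ℝ 2 K
  bdd1 : ∃ C : ℝ, ∀ x : ℝ, |deriv K x| ≤ C
  bdd2 : ∃ C : ℝ, ∀ x : ℝ, |deriv (deriv K) x| ≤ C
  pos : ∀ φ ∈ Icc (0 : ℝ) ΦF, 0 < K φ

/-- `k_min := K'(0) + ∫₀^{Φ_F} min(K''(φ), 0) dφ`. -/
def kmin (K : ℝ → ℝ) (ΦF : ℝ) : ℝ :=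
  deriv K 0 + ∫ φ in (0 : ℝ)..ΦF, min (deriv (deriv K) φ) 0

/-- `k_max := K'(0) + ∫₀^{Φ_F} max(K''(φ), 0) dφ`. -/
def kmax (K : ℝ → ℝ) (ΦF : ℝ) : ℝ :=
  deriv K 0 + ∫ φ in (0 : ℝ)..ΦF, max (deriv (deriv K) φ) 0

/-- Assumption (A2) on the initial datum. -/
structure A2 (K : ℝ → ℝ) (ΦF : ℝ) (Qinit : ℝ → ℝ) : Prop where
  reg : ContDiffOn ℝ 1 Qinit (Icc 0 1)
  mono : MonotoneOn Qinit (Icc 0 1)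
  init0 : Qinit 0 = 0
  init1 : Qinit 1 = ΦF
  deriv1 : K ΦF < derivWithin Qinit (Icc 0 1) 1
  compat : derivWithin Qinit (Icc 0 1) 1 - derivWithin Qinit (Icc 0 1) 0 = K ΦF - K 0

/-- A classical solution `(Q, N)` of the Q-system on `[0, T)` with initial datum `Qinit`. -/
structure IsQSol (K : ℝ → ℝ) (ΦF : ℝ) (T : ℝ≥0∞) (Qinit : ℝ → ℝ)
    (Q : ℝ → ℝ → ℝ) (N : ℝ → ℝ) : Prop where
  initReg : ContDiffOn ℝ 1 Qinit (Icc 0 1)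
  initMono : MonotoneOn Qinit (Icc 0 1)
  init0 : Qinit 0 = 0
  init1 : Qinit 1 = ΦF
  initDeriv : K ΦF < derivWithin Qinit (Icc 0 1) 1
  reg : ContDiffOn ℝ 1 (Function.uncurry Q) (Ico0 T ×ˢ Icc (0 : ℝ) 1)
  mono : ∀ τ ∈ Ico0 T, MonotoneOn (Q τ) (Icc 0 1)
  Ncont : ContinuousOn N (Ico0 T)
  Npos : ∀ τ ∈ Ico0 T, 0 < N τ
  pde : ∀ τ ∈ Ico0 T, ∀ η ∈ Ioo (0 : ℝ) 1,
    pdTau Q τ η + pdEta Q τ η = 1 / N τ + K (Q τ η)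
  bc : ∀ τ ∈ Ico0 T, Q τ 0 = 0
  Ndef : ∀ τ ∈ Ico0 T, 1 / N τ = pdEta Q τ 1 - K ΦF
  init : ∀ η ∈ Icc (0 : ℝ) 1, Q 0 η = Qinit η
  constraint : ∀ τ ∈ Ico0 T, K ΦF < pdEta Q τ 1

/-- A classical solution `(Q, Ñ)` of the relaxed system on `[0, T)` with initial datum `Qinit`,
where `Ñ` is unconstrained in sign. -/
structure IsRelaxedSol (K : ℝ → ℝ) (ΦF : ℝ) (T : ℝ≥0∞) (Qinit : ℝ → ℝ)
    (Q : ℝ → ℝ → ℝ) (Ntil : ℝ → ℝ) : Prop where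
  initReg : ContDiffOn ℝ 1 Qinit (Icc 0 1)
  init0 : Qinit 0 = 0
  init1 : Qinit 1 = ΦF
  reg : ContDiffOn ℝ 1 (Function.uncurry Q) (Ico0 T ×ˢ Icc (0 : ℝ) 1)
  Ncont : ContinuousOn Ntil (Ico0 T)
  pde : ∀ τ ∈ Ico0 T, ∀ η ∈ Ioo (0 : ℝ) 1,
    pdTau Q τ η + pdEta Q τ η = Ntil τ + K (Q τ η)
  bc : ∀ τ ∈ Ico0 T, Q τ 0 = 0
  Ndef : ∀ τ ∈ Ico0 T, Ntil τ = pdEta Q τ 1 - K ΦF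
  init : ∀ η ∈ Icc (0 : ℝ) 1, Q 0 η = Qinit η

/-- A steady state `(Q*, N*)` of the Q-system. -/
def IsSteadyState (K : ℝ → ℝ) (ΦF : ℝ) (Qs : ℝ → ℝ) (Ns : ℝ) : Prop :=
  ContDiffOn ℝ 1 Qs (Icc 0 1) ∧ 0 < Ns ∧
    (∀ η ∈ Icc (0 : ℝ) 1, derivWithin Qs (Icc 0 1) η = K (Qs η) + 1 / Ns) ∧
    Qs 0 = 0 ∧ Qs 1 = ΦF

/-- `P₀ f := f - ∫₀¹ f`. -/
def P0 (f : ℝ → ℝ) (η : ℝ) : ℝ := f η - ∫ x in (0 : ℝ)..1, f x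

/-- `H_init := Q_init' - K ∘ Q_init` (derivative within `[0,1]`). -/
def Hinit (K : ℝ → ℝ) (Qinit : ℝ → ℝ) (η : ℝ) : ℝ :=
  derivWithin Qinit (Icc 0 1) η - K (Qinit η)

theorem isOpen_ofReal_preimage_Iio (T : ℝ≥0∞) : IsOpen (ENNReal.ofReal ⁻¹' Iio T) :=
  isOpen_Iio.preimage ENNReal.continuous_ofReal

theorem mem_Ico0_of_le {T : ℝ≥0∞} {s τ : ℝ} (hτ : τ ∈ Ico0 T) (hs : 0 ≤ s) (hsτ : s ≤ τ) :
    s ∈ Ico0 T :=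
  ⟨hs, (ENNReal.ofReal_le_ofReal hsτ).trans_lt hτ.2⟩

theorem Ico0_mem_nhdsWithin_Ici {T : ℝ≥0∞} {τ : ℝ} (hτ : τ ∈ Ico0 T) :
    Ico0 T ∈ 𝓝[Ici 0] τ :=
  inter_mem_nhdsWithin _ ((isOpen_ofReal_preimage_Iio T).mem_nhds hτ.2)

theorem uniqueDiffOn_Ico0 (T : ℝ≥0∞) : UniqueDiffOn ℝ (Ico0 T) :=
  (uniqueDiffOn_Ici 0).inter (isOpen_ofReal_preimage_Iio T)

theorem nonneg_of_abs_deriv_le_mul_abs_self {f f' : ℝ → ℝ} {C a b : ℝ} (hab : a ≤ b)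
    (hf : ContinuousOn f (Icc a b)) (hf' : ∀ x ∈ Ico a b, HasDerivWithinAt f (f' x) (Ici x) x)
    (ha : 0 ≤ f a) (bound : ∀ x ∈ Ico a b, |f' x| ≤ C * |f x|) : 0 ≤ f b := by
  by_contra! hb
  obtain ⟨s, hs, hfs⟩ := intermediate_value_Icc' hab hf ⟨hb.le, ha⟩
  have hzero := eq_zero_of_abs_deriv_le_mul_abs_self_of_eq_zero_right
    (hf.mono (Icc_subset_Icc_left hs.1))
    (fun x hx => hf' x ⟨hs.1.trans hx.1, hx.2⟩) hfs
    (fun x hx => bound x ⟨hs.1.trans hx.1, hx.2⟩) b (right_mem_Icc.2 hs.2)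
  exact hb.ne hzero

theorem KAssump.exists_abs_sub_le {K : ℝ → ℝ} {ΦF : ℝ} (hK : KAssump K ΦF) :
    ∃ C, ∀ x y, |K x - K y| ≤ C * |x - y| := by
  obtain ⟨C, hC⟩ := hK.bdd1
  refine ⟨C, fun x y => ?_⟩
  simpa only [Real.norm_eq_abs] using Convex.norm_image_sub_le_of_norm_deriv_le (f := K)
    (fun z _ => (hK.smooth.differentiable two_ne_zero) z) (fun z _ => hC z) convex_univ
    (mem_univ y) (mem_univ x)

section Strip

variable {T : ℝ≥0∞} {Q : ℝ → ℝ → ℝ} {N K : ℝ → ℝ} {τ η : ℝ}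

theorem pdEta_eq_fderivWithin
    (hQ : DifferentiableOn ℝ (Function.uncurry Q) (Ico0 T ×ˢ Icc 0 1))
    (hτ : τ ∈ Ico0 T) (hη : η ∈ Icc (0 : ℝ) 1) :
    pdEta Q τ η = fderivWithin ℝ (Function.uncurry Q) (Ico0 T ×ˢ Icc 0 1) (τ, η) (0, 1) := by
  have hline : HasDerivWithinAt (fun x : ℝ => (τ, x)) ((0 : ℝ), (1 : ℝ)) (Icc 0 1) η :=
    (hasDerivWithinAt_const _ _ τ).prodMk (hasDerivWithinAt_id _ _)
  exact ((hQ _ ⟨hτ, hη⟩).hasFDerivWithinAt.comp_hasDerivWithinAt η hline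
    fun x hx => ⟨hτ, hx⟩).derivWithin (uniqueDiffOn_Icc one_pos η hη)

theorem pdTau_eq_fderivWithin
    (hQ : DifferentiableOn ℝ (Function.uncurry Q) (Ico0 T ×ˢ Icc 0 1))
    (hτ : τ ∈ Ico0 T) (hη : η ∈ Icc (0 : ℝ) 1) :
    pdTau Q τ η = fderivWithin ℝ (Function.uncurry Q) (Ico0 T ×ˢ Icc 0 1) (τ, η) (1, 0) := by
  have hline : HasDerivWithinAt (fun s : ℝ => (s, η)) ((1 : ℝ), (0 : ℝ)) (Ico0 T) τ :=
    (hasDerivWithinAt_id _ _).prodMk (hasDerivWithinAt_const _ _ η)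
  exact (((hQ _ ⟨hτ, hη⟩).hasFDerivWithinAt.comp_hasDerivWithinAt τ hline
    fun s hs => ⟨hs, hη⟩).mono_of_mem_nhdsWithin (Ico0_mem_nhdsWithin_Ici hτ)).derivWithin
    (uniqueDiffOn_Ici 0 τ hτ.1)

theorem pdTau_eq_zero_of_forall_eq_zero (h : ∀ s ∈ Ico0 T, Q s η = 0) (hτ : τ ∈ Ico0 T) :
    pdTau Q τ η = 0 := by
  have hconst : (fun s => Q s η) =ᶠ[𝓝[Ici 0] τ] fun _ => 0 :=
    eventually_of_mem (Ico0_mem_nhdsWithin_Ici hτ) h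
  rw [pdTau, hconst.derivWithin_eq (h τ hτ), derivWithin_fun_const, Pi.zero_apply]

theorem pdTau_add_pdEta_eq
    (hreg : ContDiffOn ℝ 1 (Function.uncurry Q) (Ico0 T ×ˢ Icc (0 : ℝ) 1)) (hK : Continuous K)
    (hpde : ∀ τ ∈ Ico0 T, ∀ η ∈ Ioo (0 : ℝ) 1,
      pdTau Q τ η + pdEta Q τ η = 1 / N τ + K (Q τ η))
    (hτ : τ ∈ Ico0 T) (hη : η ∈ Icc (0 : ℝ) 1) :
    pdTau Q τ η + pdEta Q τ η = 1 / N τ + K (Q τ η) := by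
  set F := fderivWithin ℝ (Function.uncurry Q) (Ico0 T ×ˢ Icc 0 1)
  have hQ := hreg.differentiableOn one_ne_zero
  have hslice : MapsTo (fun x : ℝ => (τ, x)) (Icc 0 1) (Ico0 T ×ˢ Icc 0 1) :=
    fun x hx => ⟨hτ, hx⟩
  have hF : ContinuousOn (fun x => F (τ, x)) (Icc 0 1) :=
    (hreg.continuousOn_fderivWithin ((uniqueDiffOn_Ico0 T).prod (uniqueDiffOn_Icc one_pos))
      le_rfl).comp (by fun_prop) hslice
  have hlhs : EqOn (fun x => pdTau Q τ x + pdEta Q τ x) (fun x => F (τ, x) (1, 0) + F (τ, x) (0, 1))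
      (Icc 0 1) := fun x hx => by
    simp only [pdTau_eq_fderivWithin hQ hτ hx, pdEta_eq_fderivWithin hQ hτ hx, F]
  have hrhs : ContinuousOn (fun x => 1 / N τ + K (Q τ x)) (Icc 0 1) :=
    continuousOn_const.add (hK.comp_continuousOn (hreg.continuousOn.comp (by fun_prop) hslice))
  refine EqOn.of_subset_closure (fun x hx => hpde τ hτ x hx)
    (((hF.clm_apply continuousOn_const).add (hF.clm_apply continuousOn_const)).congr hlhs) hrhs
    Ioo_subset_Icc_self (closure_Ioo zero_ne_one).ge hη

theorem hasDerivWithinAt_characteristic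
    (hreg : ContDiffOn ℝ 1 (Function.uncurry Q) (Ico0 T ×ˢ Icc (0 : ℝ) 1)) (hK : Continuous K)
    (hpde : ∀ τ ∈ Ico0 T, ∀ η ∈ Ioo (0 : ℝ) 1,
      pdTau Q τ η + pdEta Q τ η = 1 / N τ + K (Q τ η))
    {c s b : ℝ} (hsb : s < b) (hmem : ∀ u ∈ Icc s b, (u, u + c) ∈ Ico0 T ×ˢ Icc (0 : ℝ) 1) :
    HasDerivWithinAt (fun u => Q u (u + c)) (1 / N s + K (Q s (s + c))) (Ici s) s := by
  obtain ⟨hs, hsc⟩ := hmem s (left_mem_Icc.2 hsb.le)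
  have hQ := hreg.differentiableOn one_ne_zero
  have hline : HasDerivWithinAt (fun u : ℝ => (u, u + c)) ((1 : ℝ), (1 : ℝ)) (Icc s b) s :=
    (hasDerivWithinAt_id _ _).prodMk ((hasDerivWithinAt_id _ _).add_const c)
  have hsplit : ((1 : ℝ), (1 : ℝ)) = (1, 0) + (0, 1) := by simp
  have h := ((hQ _ ⟨hs, hsc⟩).hasFDerivWithinAt.comp_hasDerivWithinAt s hline
    hmem).mono_of_mem_nhdsWithin (Icc_mem_nhdsGE hsb)
  rwa [hsplit, map_add, ← pdTau_eq_fderivWithin hQ hs hsc, ← pdEta_eq_fderivWithin hQ hs hsc,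
    pdTau_add_pdEta_eq hreg hK hpde hs hsc] at h

/-- `max (τ - η₀) 0` is the time at which the backward characteristic through `(τ, η₀)` enters
the strip, through the initial line or through the boundary `η = 0`. -/
theorem mem_strip_of_mem_characteristic {η₀ u : ℝ} (hτ : τ ∈ Ico0 T) (hη : η ∈ Icc (0 : ℝ) 1)
    (hη₀ : η₀ ≤ η) (hu : u ∈ Icc (max (τ - η₀) 0) τ) :
    (u, u + (η - τ)) ∈ Ico0 T ×ˢ Icc (0 : ℝ) 1 := by
  obtain ⟨⟨hu₁, hu₀⟩, huτ⟩ := And.imp_left max_le_iff.1 hu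
  exact ⟨mem_Ico0_of_le hτ hu₀ huτ, by linarith, by linarith [hη.2]⟩

theorem nonneg_of_pde
    (hreg : ContDiffOn ℝ 1 (Function.uncurry Q) (Ico0 T ×ˢ Icc (0 : ℝ) 1)) (hK : Continuous K)
    (hK0 : 0 < K 0) (hNpos : ∀ τ ∈ Ico0 T, 0 < N τ)
    (hpde : ∀ τ ∈ Ico0 T, ∀ η ∈ Ioo (0 : ℝ) 1,
      pdTau Q τ η + pdEta Q τ η = 1 / N τ + K (Q τ η))
    (hbc : ∀ τ ∈ Ico0 T, Q τ 0 = 0) (hinit : ∀ η ∈ Icc (0 : ℝ) 1, 0 ≤ Q 0 η)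
    (hτ : τ ∈ Ico0 T) (hη : η ∈ Icc (0 : ℝ) 1) : 0 ≤ Q τ η := by
  obtain ⟨a, ha⟩ : ∃ a, a = max (τ - η) 0 := ⟨_, rfl⟩
  have haτ : a ≤ τ := ha ▸ max_le (by linarith [hη.1]) hτ.1
  have hmem : ∀ u ∈ Icc a τ, (u, u + (η - τ)) ∈ Ico0 T ×ˢ Icc (0 : ℝ) 1 :=
    fun u hu => mem_strip_of_mem_characteristic hτ hη le_rfl (ha ▸ hu)
  have hstart : 0 ≤ Q a (a + (η - τ)) := by
    rcases le_total τ η with h | h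
    · rw [ha, max_eq_right (by linarith), zero_add]
      exact hinit _ ⟨by linarith, by linarith [hτ.1, hη.2]⟩
    · rw [ha, max_eq_left (by linarith), sub_add_sub_cancel, sub_self,
        hbc _ (mem_Ico0_of_le hτ (by linarith) (by linarith [hη.1]))]
  -- Wherever `Q = 0` on the characteristic, its slope there is `1 / N + K 0 > 0`.
  have hfence := image_le_of_deriv_right_lt_deriv_boundary
    (f := fun u => -Q u (u + (η - τ))) (f' := fun u => -(1 / N u + K (Q u (u + (η - τ)))))
    (B := 0) (B' := 0)
    (hreg.continuousOn.comp (by fun_prop) hmem).neg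
    (fun u hu => (hasDerivWithinAt_characteristic hreg hK hpde hu.2
      fun w hw => hmem w ⟨hu.1.trans hw.1, hw.2⟩).neg)
    (by simpa using hstart) (fun _ => hasDerivAt_const _ _)
    (fun u hu hzero => by
      have hN := hNpos u (mem_Ico0_of_le hτ ((ha ▸ le_max_right _ _).trans hu.1) hu.2.le)
      simp only [Pi.zero_apply, neg_eq_zero] at hzero ⊢
      rw [hzero]
      linarith [one_div_pos.2 hN])
    (right_mem_Icc.2 haτ)
  simpa using hfence

theorem monotoneOn_of_pde
    (hreg : ContDiffOn ℝ 1 (Function.uncurry Q) (Ico0 T ×ˢ Icc (0 : ℝ) 1)) (hK : Continuous K)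
    {C : ℝ} (hKlip : ∀ x y, |K x - K y| ≤ C * |x - y|)
    (hpde : ∀ τ ∈ Ico0 T, ∀ η ∈ Ioo (0 : ℝ) 1,
      pdTau Q τ η + pdEta Q τ η = 1 / N τ + K (Q τ η))
    (hbc : ∀ τ ∈ Ico0 T, Q τ 0 = 0) (hinit : MonotoneOn (Q 0) (Icc 0 1))
    (hnonneg : ∀ τ ∈ Ico0 T, ∀ η ∈ Icc (0 : ℝ) 1, 0 ≤ Q τ η)
    (hτ : τ ∈ Ico0 T) : MonotoneOn (Q τ) (Icc 0 1) := by
  intro η₁ hη₁ η₂ hη₂ h12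
  obtain ⟨a, ha⟩ : ∃ a, a = max (τ - η₁) 0 := ⟨_, rfl⟩
  have haτ : a ≤ τ := ha ▸ max_le (by linarith [hη₁.1]) hτ.1
  have hmem₁ : ∀ u ∈ Icc a τ, (u, u + (η₁ - τ)) ∈ Ico0 T ×ˢ Icc (0 : ℝ) 1 :=
    fun u hu => mem_strip_of_mem_characteristic hτ hη₁ le_rfl (ha ▸ hu)
  have hmem₂ : ∀ u ∈ Icc a τ, (u, u + (η₂ - τ)) ∈ Ico0 T ×ˢ Icc (0 : ℝ) 1 :=
    fun u hu => mem_strip_of_mem_characteristic hτ hη₂ h12 (ha ▸ hu)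
  have hstart : 0 ≤ Q a (a + (η₂ - τ)) - Q a (a + (η₁ - τ)) := by
    rcases le_total τ η₁ with h | h
    · rw [ha, max_eq_right (by linarith), zero_add, zero_add, sub_nonneg]
      exact hinit ⟨by linarith, by linarith [hτ.1, hη₁.2]⟩
        ⟨by linarith, by linarith [hτ.1, hη₂.2]⟩ (by linarith)
    · have haT : a ∈ Ico0 T := mem_Ico0_of_le hτ (ha ▸ le_max_right _ _) haτ
      rw [ha, max_eq_left (by linarith)] at haT ⊢
      rw [show τ - η₁ + (η₂ - τ) = η₂ - η₁ by ring, sub_add_sub_cancel, sub_self, hbc _ haT,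
        sub_zero]
      exact hnonneg _ haT _ ⟨by linarith, by linarith [hη₁.1, hη₂.2]⟩
  have hderiv (u : ℝ) (hu : u ∈ Ico a τ) : HasDerivWithinAt
      (fun u => Q u (u + (η₂ - τ)) - Q u (u + (η₁ - τ)))
      (K (Q u (u + (η₂ - τ))) - K (Q u (u + (η₁ - τ)))) (Ici u) u := by
    have h₂ := hasDerivWithinAt_characteristic hreg hK hpde hu.2
      fun w hw => hmem₂ w ⟨hu.1.trans hw.1, hw.2⟩
    have h₁ := hasDerivWithinAt_characteristic hreg hK hpde hu.2
      fun w hw => hmem₁ w ⟨hu.1.trans hw.1, hw.2⟩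
    exact (h₂.sub h₁).congr_deriv (by ring)
  have hend := nonneg_of_abs_deriv_le_mul_abs_self haτ
    ((hreg.continuousOn.comp (by fun_prop) hmem₂).sub
      (hreg.continuousOn.comp (by fun_prop) hmem₁)) hderiv hstart
    (fun u _ => hKlip _ _)
  simpa using hend

end Strip

theorem stmt0_general (ΦF : ℝ) (hΦF : 0 < ΦF) (K : ℝ → ℝ) (hK : KAssump K ΦF)
    (T : ℝ≥0∞) (Qinit : ℝ → ℝ) (Q : ℝ → ℝ → ℝ) (N : ℝ → ℝ)
    (hreg : ContDiffOn ℝ 1 (Function.uncurry Q) (Ico0 T ×ˢ Icc (0 : ℝ) 1))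
    (hNpos : ∀ τ ∈ Ico0 T, 0 < N τ)
    (hpde : ∀ τ ∈ Ico0 T, ∀ η ∈ Ioo (0 : ℝ) 1,
      pdTau Q τ η + pdEta Q τ η = 1 / N τ + K (Q τ η))
    (hbc : ∀ τ ∈ Ico0 T, Q τ 0 = 0)
    (hinit : ∀ η ∈ Icc (0 : ℝ) 1, Q 0 η = Qinit η)
    (hmono : MonotoneOn Qinit (Icc 0 1)) :
    (∀ τ ∈ Ico0 T, MonotoneOn (Q τ) (Icc 0 1)) ∧
      (∀ τ ∈ Ico0 T, pdEta Q τ 0 = 1 / N τ + K 0) ∧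
      ((∀ τ ∈ Ico0 T, 1 / N τ = pdEta Q τ 1 - K ΦF) →
        ∀ τ ∈ Ico0 T, pdEta Q τ 1 - pdEta Q τ 0 = K ΦF - K 0) := by
  have hKc : Continuous K := hK.smooth.continuous
  obtain ⟨C, hKlip⟩ := hK.exists_abs_sub_le
  have hmono₀ : MonotoneOn (Q 0) (Icc 0 1) := hmono.congr fun η hη => (hinit η hη).symm
  have hnonneg (τ : ℝ) (hτ : τ ∈ Ico0 T) (η : ℝ) (hη : η ∈ Icc (0 : ℝ) 1) : 0 ≤ Q τ η :=
    nonneg_of_pde hreg hKc (hK.pos 0 ⟨le_rfl, hΦF.le⟩) hNpos hpde hbc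
      (fun x hx => (hbc 0 (mem_Ico0_of_le hτ le_rfl hτ.1)).symm.trans_le
        (hmono₀ (left_mem_Icc.2 zero_le_one) hx hx.1)) hτ hη
  have hbdry (τ : ℝ) (hτ : τ ∈ Ico0 T) : pdEta Q τ 0 = 1 / N τ + K 0 := by
    have h := pdTau_add_pdEta_eq hreg hKc hpde hτ (left_mem_Icc.2 zero_le_one)
    rwa [pdTau_eq_zero_of_forall_eq_zero hbc hτ, zero_add, hbc τ hτ] at h
  refine ⟨fun τ hτ => monotoneOn_of_pde hreg hKc hKlip hpde hbc hmono₀ hnonneg hτ, hbdry, ?_⟩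
  intro hN τ hτ
  linarith [hN τ hτ, hbdry τ hτ]

/-- Proposition 2.1: preservation of monotonicity and the hidden boundary conditions. -/
theorem stmt0 (ΦF : ℝ) (hΦF : 0 < ΦF) (K : ℝ → ℝ) (hK : KAssump K ΦF)
    (T : ℝ≥0∞) (hT : 0 < T) (Qinit : ℝ → ℝ) (Q : ℝ → ℝ → ℝ) (N : ℝ → ℝ)
    (hreg : ContDiffOn ℝ 1 (Function.uncurry Q) (Ico0 T ×ˢ Icc (0 : ℝ) 1))
    (hNpos : ∀ τ ∈ Ico0 T, 0 < N τ)
    (hpde : ∀ τ ∈ Ico0 T, ∀ η ∈ Ioo (0 : ℝ) 1,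
      pdTau Q τ η + pdEta Q τ η = 1 / N τ + K (Q τ η))
    (hbc : ∀ τ ∈ Ico0 T, Q τ 0 = 0)
    (hinit : ∀ η ∈ Icc (0 : ℝ) 1, Q 0 η = Qinit η)
    (hmono : MonotoneOn Qinit (Icc 0 1)) :
    (∀ τ ∈ Ico0 T, MonotoneOn (Q τ) (Icc 0 1)) ∧
      (∀ τ ∈ Ico0 T, pdEta Q τ 0 = 1 / N τ + K 0) ∧
      ((∀ τ ∈ Ico0 T, 1 / N τ = pdEta Q τ 1 - K ΦF) →
        ∀ τ ∈ Ico0 T, pdEta Q τ 1 - pdEta Q τ 0 = K ΦF - K 0) :=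
  stmt0_general ΦF hΦF K hK T Qinit Q N hreg hNpos hpde hbc hinit hmono
end
end

section
/- Let Q₁, Q₂ ∈ C¹([0,1]) be nondecreasing functions with Q₁(0) = Q₂(0) = 0 and Q₁(1) = Q₂(1) = Φ_F. Define I := ∫₀¹ |∂_ηQ₁(η) − ∂_ηQ₂(η)| dη and I_K := ∫₀¹ ∂_η(K(Q₁(η)) − K(Q₂(η))) · sign(∂_ηQ₁(η) − ∂_ηQ₂(η)) dη, where sign(x) equals 1 for x > 0, 0 for x = 0, and −1 for x < 0. Then k_min · I ≤ I_K ≤ k_max · I. -/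
open Real Set MeasureTheory Filter Topology
open scoped ENNReal

noncomputable section

open intervalIntegral Function


lemma measurable_sign_comp {f : ℝ → ℝ} (hf : Measurable f) :
    Measurable (fun x => Real.sign (f x)) := by
  have : (fun x => Real.sign (f x)) =
      fun x => if f x < 0 then (-1:ℝ) else if 0 < f x then 1 else 0 := rfl
  rw [this]
  exact Measurable.ite (measurableSet_lt hf measurable_const) measurable_const
    (Measurable.ite (measurableSet_lt measurable_const hf) measurable_const measurable_const)

lemma abs_sign_le (x : ℝ) : |Real.sign x| ≤ 1 := by
  rcases Real.sign_apply_eq x with h | h | h <;> rw [h] <;> norm_num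

lemma mul_sign_self (x : ℝ) : x * Real.sign x = |x| := by
  rcases lt_trichotomy x 0 with h | h | h
  · rw [Real.sign_of_neg h, abs_of_neg h]; ring
  · simp [h]
  · rw [Real.sign_of_pos h, abs_of_pos h]; ring

lemma II_of_bound {f B : ℝ → ℝ} (hm : Measurable f) (hB : Continuous B)
    (hb : ∀ x, |f x| ≤ B x) (a b : ℝ) : IntervalIntegrable f volume a b := by
  refine (hB.intervalIntegrable a b).mono_fun hm.aestronglyMeasurable ?_
  filter_upwards with x
  simp only [norm_eq_abs]
  exact (hb x).trans (le_abs_self _)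

lemma ae_ne (c : ℝ) : ∀ᵐ x : ℝ, x ≠ c := by
  refine ae_iff.mpr ?_
  simp [Set.setOf_eq_eq_singleton']

lemma lemA (q₁ q₂ : ℝ → ℝ) (h₁ : Continuous q₁) (h₂ : Continuous q₂)
    (pos₁ : ∀ x, 0 ≤ q₁ x) (pos₂ : ∀ x, 0 ≤ q₂ x)
    (c₁ c₂ : ℝ) (hc0 : 0 ≤ c₁) (hc : c₁ ≤ c₂) (hc1 : c₂ ≤ 1)
    (E1 : (∫ x in c₂..1, (q₂ x - q₁ x)) = ∫ x in c₁..c₂, q₁ x)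
    (E2 : (∫ x in c₁..c₂, q₂ x) = ∫ x in (0:ℝ)..c₁, (q₁ x - q₂ x)) :
    0 ≤ (∫ η in (0:ℝ)..1, ((Ici c₁).indicator q₁ η - (Ici c₂).indicator q₂ η)
          * Real.sign (q₁ η - q₂ η)) ∧
    (∫ η in (0:ℝ)..1, ((Ici c₁).indicator q₁ η - (Ici c₂).indicator q₂ η)
          * Real.sign (q₁ η - q₂ η)) ≤ ∫ η in (0:ℝ)..1, |q₁ η - q₂ η| := by
  set s : ℝ → ℝ := fun η => Real.sign (q₁ η - q₂ η) with hs
  set f : ℝ → ℝ := fun η => ((Ici c₁).indicator q₁ η - (Ici c₂).indicator q₂ η) * s η with hf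
  have hmf : Measurable f := by
    apply Measurable.mul
    · exact (h₁.measurable.indicator measurableSet_Ici).sub
        (h₂.measurable.indicator measurableSet_Ici)
    · exact measurable_sign_comp (h₁.sub h₂).measurable
  have hbf : ∀ x, |f x| ≤ |q₁ x| + |q₂ x| := by
    intro x
    rw [hf, abs_mul]
    calc |(Ici c₁).indicator q₁ x - (Ici c₂).indicator q₂ x| * |s x|
        ≤ (|q₁ x| + |q₂ x|) * 1 := by
          apply mul_le_mul _ (abs_sign_le _) (abs_nonneg _) (by positivity)
          refine (abs_sub _ _).trans (add_le_add ?_ ?_) <;>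
            · rw [Set.indicator_apply]; split <;> simp [abs_nonneg]
      _ = |q₁ x| + |q₂ x| := mul_one _
  have hIf : ∀ a b : ℝ, IntervalIntegrable f volume a b :=
    II_of_bound hmf (h₁.abs.add h₂.abs) hbf
  have hIabs : ∀ a b : ℝ, IntervalIntegrable (fun x => |q₁ x - q₂ x|) volume a b :=
    fun a b => ((h₁.sub h₂).abs).intervalIntegrable a b
  have hsplit : (∫ η in (0:ℝ)..1, f η) =
      (∫ η in (0:ℝ)..c₁, f η) + (∫ η in c₁..c₂, f η) + (∫ η in c₂..1, f η) := by
    rw [integral_add_adjacent_intervals (hIf 0 c₁) (hIf c₁ c₂),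
      integral_add_adjacent_intervals (hIf 0 c₂) (hIf c₂ 1)]
  have p1 : (∫ η in (0:ℝ)..c₁, f η) = 0 := by
    have : (∫ η in (0:ℝ)..c₁, f η) = ∫ η in (0:ℝ)..c₁, (0:ℝ) := by
      apply intervalIntegral.integral_congr_ae
      filter_upwards [ae_ne c₁, ae_ne c₂] with x hx1 hx2 hx
      rw [Set.uIoc_of_le hc0] at hx
      have hxc1 : x < c₁ := lt_of_le_of_ne hx.2 hx1
      simp only [hf]
      rw [Set.indicator_of_notMem (by simpa using not_le.mpr hxc1),
        Set.indicator_of_notMem (by simpa using not_le.mpr (lt_of_lt_of_le hxc1 hc))]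
      ring
    simpa using this
  have p2 : (∫ η in c₁..c₂, f η) = ∫ η in c₁..c₂, q₁ η * s η := by
    apply intervalIntegral.integral_congr_ae
    filter_upwards [ae_ne c₂] with x hx2 hx
    rw [Set.uIoc_of_le hc] at hx
    have hxc2 : x < c₂ := lt_of_le_of_ne hx.2 hx2
    simp only [hf]
    rw [Set.indicator_of_mem (by simpa using hx.1.le),
      Set.indicator_of_notMem (by simpa using not_le.mpr hxc2)]
    ring
  have p3 : (∫ η in c₂..1, f η) = ∫ η in c₂..1, |q₁ η - q₂ η| := by
    apply intervalIntegral.integral_congr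
    intro x hx
    rw [Set.uIcc_of_le hc1] at hx
    simp only [hf]
    rw [Set.indicator_of_mem (by simpa using le_trans hc hx.1),
      Set.indicator_of_mem (by simpa using hx.1)]
    exact mul_sign_self _
  -- integrability of pieces
  have hIq1 : ∀ a b : ℝ, IntervalIntegrable (fun x => q₁ x * s x) volume a b := by
    intro a b
    apply II_of_bound (h₁.measurable.mul (measurable_sign_comp (h₁.sub h₂).measurable)) h₁.abs
    intro x
    show |q₁ x * s x| ≤ |q₁ x|
    rw [abs_mul]
    calc |q₁ x| * |s x| ≤ |q₁ x| * 1 := by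
          exact mul_le_mul_of_nonneg_left (abs_sign_le _) (abs_nonneg _)
      _ = |q₁ x| := mul_one _
  -- lower bound
  have L1 : -(∫ x in c₁..c₂, q₁ x) ≤ ∫ x in c₁..c₂, q₁ x * s x := by
    rw [← intervalIntegral.integral_neg]
    apply intervalIntegral.integral_mono_on hc (by
      exact ((h₁.neg).intervalIntegrable c₁ c₂)) (hIq1 c₁ c₂)
    intro x _
    have := abs_le.mp (abs_sign_le (q₁ x - q₂ x))
    nlinarith [pos₁ x]
  have L2 : (∫ x in c₁..c₂, q₁ x) ≤ ∫ x in c₂..1, |q₁ x - q₂ x| := by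
    rw [← E1]
    apply intervalIntegral.integral_mono_on hc1
      (((h₂.sub h₁)).intervalIntegrable c₂ 1) (hIabs c₂ 1)
    intro x _
    rw [abs_sub_comm]
    exact le_abs_self _
  -- upper bound pieces
  have U1 : (∫ x in c₁..c₂, q₁ x * s x) ≤
      ∫ x in c₁..c₂, (|q₁ x - q₂ x| + q₂ x) := by
    apply intervalIntegral.integral_mono_on hc (hIq1 c₁ c₂)
      (((h₁.sub h₂).abs.add h₂).intervalIntegrable c₁ c₂)
    intro x _
    show q₁ x * s x ≤ |q₁ x - q₂ x| + q₂ x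
    have h1 := abs_le.mp (abs_sign_le (q₁ x - q₂ x))
    have h2 := le_abs_self (q₁ x - q₂ x)
    nlinarith [pos₁ x, pos₂ x]
  have U2 : (∫ x in c₁..c₂, (|q₁ x - q₂ x| + q₂ x)) =
      (∫ x in c₁..c₂, |q₁ x - q₂ x|) + ∫ x in c₁..c₂, q₂ x := by
    exact intervalIntegral.integral_add (hIabs c₁ c₂) (h₂.intervalIntegrable c₁ c₂)
  have U3 : (∫ x in c₁..c₂, q₂ x) ≤ ∫ x in (0:ℝ)..c₁, |q₁ x - q₂ x| := by
    rw [E2]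
    apply intervalIntegral.integral_mono_on hc0
      ((h₁.sub h₂).intervalIntegrable 0 c₁) (hIabs 0 c₁)
    intro x _
    exact le_abs_self _
  have habs_split : (∫ η in (0:ℝ)..1, |q₁ η - q₂ η|) =
      (∫ η in (0:ℝ)..c₁, |q₁ η - q₂ η|) + (∫ η in c₁..c₂, |q₁ η - q₂ η|)
        + (∫ η in c₂..1, |q₁ η - q₂ η|) := by
    rw [integral_add_adjacent_intervals (hIabs 0 c₁) (hIabs c₁ c₂),
      integral_add_adjacent_intervals (hIabs 0 c₂) (hIabs c₂ 1)]
  constructor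
  · rw [hsplit, p1, p2, p3]; linarith
  · rw [hsplit, p1, p2, p3, habs_split]; linarith

lemma ftcQ {Q : ℝ → ℝ} (h : ContDiffOn ℝ 1 Q (Icc 0 1)) {a b : ℝ}
    (ha : 0 ≤ a) (hab : a ≤ b) (hb : b ≤ 1) :
    ∫ x in a..b, derivWithin Q (Icc 0 1) x = Q b - Q a := by
  apply intervalIntegral.integral_eq_sub_of_hasDeriv_right_of_le hab
  · exact (h.continuousOn).mono (Icc_subset_Icc ha hb)
  · intro x hx
    have hx' : x ∈ Ioo (0:ℝ) 1 := ⟨lt_of_le_of_lt ha hx.1, lt_of_lt_of_le hx.2 hb⟩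
    have hd : HasDerivWithinAt Q (derivWithin Q (Icc 0 1) x) (Icc 0 1) x :=
      (h.differentiableOn one_ne_zero x (Ioo_subset_Icc_self hx')).hasDerivWithinAt
    exact (hd.hasDerivAt (Icc_mem_nhds hx'.1 hx'.2)).hasDerivWithinAt
  · apply ContinuousOn.intervalIntegrable
    rw [uIcc_of_le hab]
    exact (h.continuousOn_derivWithin (uniqueDiffOn_Icc one_pos) le_rfl).mono
      (Icc_subset_Icc ha hb)

lemma derivWithin_nonneg_of_monotoneOn {Q : ℝ → ℝ} (h : ContDiffOn ℝ 1 Q (Icc 0 1))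
    (hm : MonotoneOn Q (Icc 0 1)) {x : ℝ} (hx : x ∈ Icc (0:ℝ) 1) :
    0 ≤ derivWithin Q (Icc 0 1) x := by
  have hd : HasDerivWithinAt Q (derivWithin Q (Icc 0 1) x) (Icc 0 1) x :=
    (h.differentiableOn one_ne_zero x hx).hasDerivWithinAt
  rw [hasDerivWithinAt_iff_tendsto_slope] at hd
  have hxcl : x ∈ closure (Icc (0:ℝ) 1 \ {x}) := by
    rcases lt_or_eq_of_le hx.2 with hlt | heq
    · have h1 : Ioo x 1 ⊆ Icc (0:ℝ) 1 \ {x} :=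
        fun y hy => ⟨⟨le_trans hx.1 hy.1.le, hy.2.le⟩, (ne_of_gt hy.1)⟩
      have h2 := closure_mono h1
      rw [closure_Ioo (ne_of_lt hlt)] at h2
      exact h2 ⟨le_refl x, hlt.le⟩
    · have h0 : (0:ℝ) < x := by rw [heq]; norm_num
      have h1 : Ioo 0 x ⊆ Icc (0:ℝ) 1 \ {x} :=
        fun y hy => ⟨⟨hy.1.le, le_trans hy.2.le hx.2⟩, (ne_of_lt hy.2)⟩
      have h2 := closure_mono h1
      rw [closure_Ioo (ne_of_lt h0)] at h2
      exact h2 ⟨h0.le, le_refl x⟩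
  haveI hne : (𝓝[Icc (0:ℝ) 1 \ {x}] x).NeBot := mem_closure_iff_nhdsWithin_neBot.mp hxcl
  refine ge_of_tendsto hd ?_
  filter_upwards [self_mem_nhdsWithin] with y hy
  obtain ⟨hy1, hy2⟩ := hy
  have hyne : y ≠ x := hy2
  rw [slope_def_field]
  rcases lt_or_gt_of_ne hyne with hlt | hgt
  · exact div_nonneg_of_nonpos (by simpa using sub_nonpos.mpr (hm hy1 hx hlt.le)) (by linarith)

  · apply div_nonneg
    · simpa using hm hx hy1 hgt.le
    · linarith

lemma levelSet {Qt : ℝ → ℝ} (hm : Monotone Qt) (hcont : Continuous Qt)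
    (h0 : Qt 0 = 0) {φ : ℝ} (hφ0 : 0 < φ) (hφ1 : φ ≤ Qt 1) :
    ∃ c, 0 ≤ c ∧ c ≤ 1 ∧ Qt c = φ ∧ ∀ η, φ ≤ Qt η ↔ c ≤ η := by
  set A := {η : ℝ | Qt η < φ} with hA
  have hA0 : (0:ℝ) ∈ A := by simp [hA, h0, hφ0]
  have hAbdd : ∀ η ∈ A, η ≤ 1 := by
    intro η hη
    by_contra hcon
    push_neg at hcon
    have : φ ≤ Qt η := le_trans hφ1 (hm hcon.le)
    exact absurd hη (by simp [hA]; linarith)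
  have bdd : BddAbove A := ⟨1, hAbdd⟩
  set c := sSup A with hcdef
  have hc0 : 0 ≤ c := le_csSup bdd hA0
  have hc1 : c ≤ 1 := csSup_le ⟨0, hA0⟩ hAbdd
  have hopen : IsOpen A := isOpen_Iio.preimage hcont
  have hQc_ge : φ ≤ Qt c := by
    by_contra hcon
    push_neg at hcon
    have hcA : c ∈ A := hcon
    obtain ⟨ε, hε, hball⟩ := Metric.isOpen_iff.mp hopen c hcA
    have : c + ε/2 ∈ A := hball (by rw [Metric.mem_ball, Real.dist_eq, show c + ε/2 - c = ε/2 by ring, abs_of_pos (by linarith)]; linarith)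
    have := le_csSup bdd this
    linarith
  have hkey : ∀ η, φ ≤ Qt η ↔ c ≤ η := by
    intro η
    constructor
    · intro hη
      apply csSup_le ⟨0, hA0⟩
      intro a ha
      by_contra hcon
      push_neg at hcon
      have : Qt η ≤ Qt a := hm hcon.le
      have : Qt a < φ := ha
      linarith
    · intro hη
      exact le_trans hQc_ge (hm hη)
  have hQc_le : Qt c ≤ φ := by
    have hclA : c ∈ closure A := csSup_mem_closure ⟨0, hA0⟩ bdd
    have hsub : closure A ⊆ {x | Qt x ≤ φ} :=
      closure_minimal (fun x hx => show Qt x ≤ φ from le_of_lt hx) (isClosed_le hcont continuous_const)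
    exact hsub hclA
  exact ⟨c, hc0, hc1, le_antisymm hQc_le hQc_ge, hkey⟩

lemma minmax_bound {k j Iv : ℝ} (h0 : 0 ≤ j) (h1 : j ≤ Iv) :
    min k 0 * Iv ≤ k * j ∧ k * j ≤ max k 0 * Iv := by
  rcases le_or_gt 0 k with hk | hk
  · rw [min_eq_right (by linarith), max_eq_left (by linarith)]
    constructor <;> nlinarith
  · rw [min_eq_left (by linarith), max_eq_right (by linarith)]
    constructor <;> nlinarith

lemma lemB (ΦF : ℝ) (hΦF : 0 < ΦF) (K2 : ℝ → ℝ) (hK2 : Continuous K2)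
    (C2 : ℝ) (hC2 : ∀ x, |K2 x| ≤ C2)
    (Qt₁ Qt₂ qt₁ qt₂ : ℝ → ℝ)
    (hQ₁c : Continuous Qt₁) (hQ₂c : Continuous Qt₂)
    (hq₁c : Continuous qt₁) (hq₂c : Continuous qt₂)
    (hQ₁m : Monotone Qt₁) (hQ₂m : Monotone Qt₂)
    (hQ₁0 : Qt₁ 0 = 0) (hQ₂0 : Qt₂ 0 = 0) (hQ₁1 : Qt₁ 1 = ΦF) (hQ₂1 : Qt₂ 1 = ΦF)
    (hq₁0 : ∀ x, 0 ≤ qt₁ x) (hq₂0 : ∀ x, 0 ≤ qt₂ x)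
    (M₁ M₂ : ℝ) (hM₁ : ∀ x, |qt₁ x| ≤ M₁) (hM₂ : ∀ x, |qt₂ x| ≤ M₂)
    (hF1 : ∀ a b : ℝ, 0 ≤ a → a ≤ b → b ≤ 1 → (∫ x in a..b, qt₁ x) = Qt₁ b - Qt₁ a)
    (hF2 : ∀ a b : ℝ, 0 ≤ a → a ≤ b → b ≤ 1 → (∫ x in a..b, qt₂ x) = Qt₂ b - Qt₂ a) :
    (∫ φ in (0:ℝ)..ΦF, min (K2 φ) 0) * (∫ η in (0:ℝ)..1, |qt₁ η - qt₂ η|) ≤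
      (∫ η in (0:ℝ)..1, ((∫ φ in (0:ℝ)..Qt₁ η, K2 φ) * qt₁ η
        - (∫ φ in (0:ℝ)..Qt₂ η, K2 φ) * qt₂ η) * Real.sign (qt₁ η - qt₂ η)) ∧
    (∫ η in (0:ℝ)..1, ((∫ φ in (0:ℝ)..Qt₁ η, K2 φ) * qt₁ η
        - (∫ φ in (0:ℝ)..Qt₂ η, K2 φ) * qt₂ η) * Real.sign (qt₁ η - qt₂ η)) ≤
      (∫ φ in (0:ℝ)..ΦF, max (K2 φ) 0) * (∫ η in (0:ℝ)..1, |qt₁ η - qt₂ η|) := by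
  set s : ℝ → ℝ := fun η => Real.sign (qt₁ η - qt₂ η) with hs
  set e₁ : ℝ → ℝ → ℝ := fun η φ => if φ ≤ Qt₁ η then qt₁ η else 0 with he₁def
  set e₂ : ℝ → ℝ → ℝ := fun η φ => if φ ≤ Qt₂ η then qt₂ η else 0 with he₂def
  set F : ℝ → ℝ → ℝ := fun η φ => (K2 φ * e₁ η φ - K2 φ * e₂ η φ) * s η with hFdef
  set Ival : ℝ := ∫ η in (0:ℝ)..1, |qt₁ η - qt₂ η| with hIv
  have hIv0 : 0 ≤ Ival :=
    intervalIntegral.integral_nonneg zero_le_one (fun x _ => abs_nonneg _)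
  have hsm : Measurable s := measurable_sign_comp (hq₁c.sub hq₂c).measurable
  have hsb : ∀ x, |s x| ≤ 1 := fun x => abs_sign_le _
  -- pointwise rewriting of the inner primitive integral
  have key : ∀ (Qt qt : ℝ → ℝ) (η : ℝ), 0 ≤ Qt η → Qt η ≤ ΦF →
      (∫ φ in (0:ℝ)..Qt η, K2 φ) * qt η
        = ∫ φ in Ioc (0:ℝ) ΦF, K2 φ * (if φ ≤ Qt η then qt η else 0) := by
    intro Qt qt η h0 h1
    have hset : Ioc (0:ℝ) ΦF ∩ Iic (Qt η) = Ioc 0 (Qt η) := by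
      ext φ
      simp only [mem_inter_iff, mem_Ioc, mem_Iic]
      constructor
      · rintro ⟨⟨a, _⟩, b⟩; exact ⟨a, b⟩
      · rintro ⟨a, b⟩; exact ⟨⟨a, b.trans h1⟩, b⟩
    have heq : (fun φ => K2 φ * (if φ ≤ Qt η then qt η else 0))
        = (Iic (Qt η)).indicator (fun φ => K2 φ * qt η) := by
      funext φ
      rw [Set.indicator_apply]
      simp only [mem_Iic]
      split_ifs <;> ring
    rw [heq, setIntegral_indicator measurableSet_Iic, hset,
      ← intervalIntegral.integral_of_le h0, intervalIntegral.integral_mul_const]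
  -- integrability of the inner integrand
  have hintK : ∀ (Qt qt : ℝ → ℝ) (η : ℝ),
      IntegrableOn (fun φ => K2 φ * (if φ ≤ Qt η then qt η else 0)) (Ioc 0 ΦF) volume := by
    intro Qt qt η
    have heq : (fun φ => K2 φ * (if φ ≤ Qt η then qt η else 0))
        = (Iic (Qt η)).indicator (fun φ => K2 φ * qt η) := by
      funext φ
      rw [Set.indicator_apply]
      simp only [mem_Iic]
      split_ifs <;> ring
    rw [heq]
    exact ((hK2.mul continuous_const).integrableOn_Ioc).indicator measurableSet_Iic
  -- rewrite the middle integral as an iterated integral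
  have hSrw : (∫ η in (0:ℝ)..1, ((∫ φ in (0:ℝ)..Qt₁ η, K2 φ) * qt₁ η
        - (∫ φ in (0:ℝ)..Qt₂ η, K2 φ) * qt₂ η) * s η)
      = ∫ η in Ioc (0:ℝ) 1, (∫ φ in Ioc (0:ℝ) ΦF, F η φ) := by
    rw [intervalIntegral.integral_of_le zero_le_one]
    refine setIntegral_congr_fun measurableSet_Ioc (fun η hη => ?_)
    have h10 : 0 ≤ Qt₁ η := hQ₁0 ▸ hQ₁m hη.1.le
    have h11 : Qt₁ η ≤ ΦF := hQ₁1 ▸ hQ₁m hη.2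
    have h20 : 0 ≤ Qt₂ η := hQ₂0 ▸ hQ₂m hη.1.le
    have h21 : Qt₂ η ≤ ΦF := hQ₂1 ▸ hQ₂m hη.2
    rw [key Qt₁ qt₁ η h10 h11, key Qt₂ qt₂ η h20 h21,
      ← MeasureTheory.integral_sub (hintK Qt₁ qt₁ η) (hintK Qt₂ qt₂ η),
      ← MeasureTheory.integral_mul_const]
  -- integrability on the product
  have hC20 : 0 ≤ C2 := le_trans (abs_nonneg _) (hC2 0)
  have hM10 : 0 ≤ M₁ := le_trans (abs_nonneg _) (hM₁ 0)
  have hM20 : 0 ≤ M₂ := le_trans (abs_nonneg _) (hM₂ 0)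
  have hFm : Measurable (uncurry F) := by
    apply Measurable.mul
    · apply Measurable.sub <;>
      · apply Measurable.mul (hK2.measurable.comp measurable_snd)
        exact Measurable.ite
          (measurableSet_le measurable_snd (by fun_prop))
          (by fun_prop) measurable_const
    · exact hsm.comp measurable_fst
  have hFbound : ∀ p : ℝ × ℝ, ‖uncurry F p‖ ≤ C2 * M₁ + C2 * M₂ := by
    rintro ⟨η, φ⟩
    simp only [uncurry, norm_eq_abs, hFdef]
    have he1b : |e₁ η φ| ≤ M₁ := by
      rw [he₁def]; dsimp only; split_ifs
      · exact hM₁ η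
      · simpa using hM10
    have he2b : |e₂ η φ| ≤ M₂ := by
      rw [he₂def]; dsimp only; split_ifs
      · exact hM₂ η
      · simpa using hM20
    calc |(K2 φ * e₁ η φ - K2 φ * e₂ η φ) * s η|
        ≤ |K2 φ * e₁ η φ - K2 φ * e₂ η φ| * 1 := by
          rw [abs_mul]; exact mul_le_mul_of_nonneg_left (hsb η) (abs_nonneg _)
      _ ≤ (|K2 φ| * |e₁ η φ| + |K2 φ| * |e₂ η φ|) := by
          rw [mul_one, ← abs_mul, ← abs_mul]; exact abs_sub _ _
      _ ≤ C2 * M₁ + C2 * M₂ :=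
          add_le_add (mul_le_mul (hC2 φ) he1b (abs_nonneg _) hC20)
            (mul_le_mul (hC2 φ) he2b (abs_nonneg _) hC20)
  have hFint : Integrable (uncurry F)
      ((volume.restrict (Ioc (0:ℝ) 1)).prod (volume.restrict (Ioc (0:ℝ) ΦF))) := by
    refine Integrable.mono' (integrable_const (C2 * M₁ + C2 * M₂))
      hFm.aestronglyMeasurable (ae_of_all _ hFbound)
  have hswap : (∫ η in Ioc (0:ℝ) 1, (∫ φ in Ioc (0:ℝ) ΦF, F η φ))
      = ∫ φ in Ioc (0:ℝ) ΦF, (∫ η in Ioc (0:ℝ) 1, F η φ) :=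
    MeasureTheory.integral_integral_swap hFint
  set J : ℝ → ℝ := fun φ => ∫ η in Ioc (0:ℝ) 1, (e₁ η φ - e₂ η φ) * s η with hJdef
  have hinner : ∀ φ, (∫ η in Ioc (0:ℝ) 1, F η φ) = K2 φ * J φ := by
    intro φ
    rw [hJdef]
    dsimp only
    rw [← MeasureTheory.integral_const_mul]
    congr 1
    funext η
    rw [hFdef]
    ring
  -- bounds on J
  have hJb : ∀ φ ∈ Ioc (0:ℝ) ΦF, 0 ≤ J φ ∧ J φ ≤ Ival := by
    intro φ hφ
    obtain ⟨c₁, hc₁0, hc₁1, hQc₁, hkey₁⟩ :=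
      levelSet hQ₁m hQ₁c hQ₁0 hφ.1 (le_of_le_of_eq hφ.2 hQ₁1.symm)
    obtain ⟨c₂, hc₂0, hc₂1, hQc₂, hkey₂⟩ :=
      levelSet hQ₂m hQ₂c hQ₂0 hφ.1 (le_of_le_of_eq hφ.2 hQ₂1.symm)
    have he1 : ∀ η, e₁ η φ = (Ici c₁).indicator qt₁ η := by
      intro η
      rw [he₁def, Set.indicator_apply]
      simp only [mem_Ici]
      exact if_congr (hkey₁ η) rfl rfl
    have he2 : ∀ η, e₂ η φ = (Ici c₂).indicator qt₂ η := by
      intro η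
      rw [he₂def, Set.indicator_apply]
      simp only [mem_Ici]
      exact if_congr (hkey₂ η) rfl rfl
    have hJφ : J φ = ∫ η in (0:ℝ)..1,
        ((Ici c₁).indicator qt₁ η - (Ici c₂).indicator qt₂ η) * s η := by
      rw [hJdef, intervalIntegral.integral_of_le zero_le_one]
      dsimp only
      congr 1
      funext η
      rw [he1, he2]
    rcases le_total c₁ c₂ with hcc | hcc
    · have E1 : (∫ x in c₂..1, (qt₂ x - qt₁ x)) = ∫ x in c₁..c₂, qt₁ x := by
        rw [intervalIntegral.integral_sub (hq₂c.intervalIntegrable _ _)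
          (hq₁c.intervalIntegrable _ _),
          hF2 c₂ 1 hc₂0 hc₂1 le_rfl, hF1 c₂ 1 hc₂0 hc₂1 le_rfl,
          hF1 c₁ c₂ hc₁0 hcc hc₂1, hQc₁, hQc₂, hQ₁1, hQ₂1]
        ring
      have E2 : (∫ x in c₁..c₂, qt₂ x) = ∫ x in (0:ℝ)..c₁, (qt₁ x - qt₂ x) := by
        rw [intervalIntegral.integral_sub (hq₁c.intervalIntegrable _ _)
          (hq₂c.intervalIntegrable _ _),
          hF2 c₁ c₂ hc₁0 hcc hc₂1, hF1 0 c₁ le_rfl hc₁0 hc₁1, hF2 0 c₁ le_rfl hc₁0 hc₁1,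
          hQc₁, hQc₂, hQ₁0, hQ₂0]
        ring
      have := lemA qt₁ qt₂ hq₁c hq₂c hq₁0 hq₂0 c₁ c₂ hc₁0 hcc hc₂1 E1 E2
      rw [hJφ]
      exact this
    · have E1 : (∫ x in c₁..1, (qt₁ x - qt₂ x)) = ∫ x in c₂..c₁, qt₂ x := by
        rw [intervalIntegral.integral_sub (hq₁c.intervalIntegrable _ _)
          (hq₂c.intervalIntegrable _ _),
          hF1 c₁ 1 hc₁0 hc₁1 le_rfl, hF2 c₁ 1 hc₁0 hc₁1 le_rfl,
          hF2 c₂ c₁ hc₂0 hcc hc₁1, hQc₁, hQc₂, hQ₁1, hQ₂1]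
        ring
      have E2 : (∫ x in c₂..c₁, qt₁ x) = ∫ x in (0:ℝ)..c₂, (qt₂ x - qt₁ x) := by
        rw [intervalIntegral.integral_sub (hq₂c.intervalIntegrable _ _)
          (hq₁c.intervalIntegrable _ _),
          hF1 c₂ c₁ hc₂0 hcc hc₁1, hF2 0 c₂ le_rfl hc₂0 hc₂1, hF1 0 c₂ le_rfl hc₂0 hc₂1,
          hQc₁, hQc₂, hQ₁0, hQ₂0]
        ring
      have hsw := lemA qt₂ qt₁ hq₂c hq₁c hq₂0 hq₁0 c₂ c₁ hc₂0 hcc hc₁1 E1 E2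
      have hconv : (∫ η in (0:ℝ)..1,
          ((Ici c₂).indicator qt₂ η - (Ici c₁).indicator qt₁ η) * Real.sign (qt₂ η - qt₁ η))
          = J φ := by
        rw [hJφ]
        apply intervalIntegral.integral_congr
        intro η _
        dsimp only
        rw [show qt₂ η - qt₁ η = -(qt₁ η - qt₂ η) by ring, Real.sign_neg, hs]
        ring
      have hconv2 : (∫ η in (0:ℝ)..1, |qt₂ η - qt₁ η|) = Ival := by
        rw [hIv]
        apply intervalIntegral.integral_congr
        intro η _
        dsimp only
        rw [abs_sub_comm]
      rw [hconv, hconv2] at hsw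
      exact hsw
  -- final assembly
  have hGint : Integrable (fun φ => ∫ η in Ioc (0:ℝ) 1, F η φ)
      (volume.restrict (Ioc (0:ℝ) ΦF)) := hFint.swap.integral_prod_left
  have hlow : (∫ φ in Ioc (0:ℝ) ΦF, min (K2 φ) 0 * Ival)
      ≤ ∫ φ in Ioc (0:ℝ) ΦF, (∫ η in Ioc (0:ℝ) 1, F η φ) := by
    refine setIntegral_mono_on
      (((hK2.min continuous_const).mul continuous_const).integrableOn_Ioc)
      hGint measurableSet_Ioc (fun φ hφ => ?_)
    rw [hinner φ]
    exact (minmax_bound (hJb φ hφ).1 (hJb φ hφ).2).1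
  have hhigh : (∫ φ in Ioc (0:ℝ) ΦF, (∫ η in Ioc (0:ℝ) 1, F η φ))
      ≤ ∫ φ in Ioc (0:ℝ) ΦF, max (K2 φ) 0 * Ival := by
    refine setIntegral_mono_on hGint
      (((hK2.max continuous_const).mul continuous_const).integrableOn_Ioc)
      measurableSet_Ioc (fun φ hφ => ?_)
    rw [hinner φ]
    exact (minmax_bound (hJb φ hφ).1 (hJb φ hφ).2).2
  have hminrw : (∫ φ in Ioc (0:ℝ) ΦF, min (K2 φ) 0 * Ival)
      = (∫ φ in (0:ℝ)..ΦF, min (K2 φ) 0) * Ival := by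
    rw [intervalIntegral.integral_of_le hΦF.le, ← MeasureTheory.integral_mul_const]
  have hmaxrw : (∫ φ in Ioc (0:ℝ) ΦF, max (K2 φ) 0 * Ival)
      = (∫ φ in (0:ℝ)..ΦF, max (K2 φ) 0) * Ival := by
    rw [intervalIntegral.integral_of_le hΦF.le, ← MeasureTheory.integral_mul_const]
  constructor
  · rw [hSrw, hswap, ← hminrw]
    exact hlow
  · rw [hSrw, hswap, ← hmaxrw]
    exact hhigh

/-- Lemma 4.2: the integral estimate `k_min · I ≤ I_K ≤ k_max · I`. -/
theorem stmt8 (ΦF : ℝ) (hΦF : 0 < ΦF) (K : ℝ → ℝ) (hK : KAssump K ΦF)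
    (Q₁ Q₂ : ℝ → ℝ)
    (h1 : ContDiffOn ℝ 1 Q₁ (Icc 0 1)) (h2 : ContDiffOn ℝ 1 Q₂ (Icc 0 1))
    (m1 : MonotoneOn Q₁ (Icc 0 1)) (m2 : MonotoneOn Q₂ (Icc 0 1))
    (b10 : Q₁ 0 = 0) (b20 : Q₂ 0 = 0) (b11 : Q₁ 1 = ΦF) (b21 : Q₂ 1 = ΦF)
    (I IK : ℝ)
    (hI : I = ∫ η in (0 : ℝ)..1,
      |derivWithin Q₁ (Icc 0 1) η - derivWithin Q₂ (Icc 0 1) η|)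
    (hIK : IK = ∫ η in (0 : ℝ)..1,
      derivWithin (fun x => K (Q₁ x) - K (Q₂ x)) (Icc 0 1) η *
        Real.sign (derivWithin Q₁ (Icc 0 1) η - derivWithin Q₂ (Icc 0 1) η)) :
    kmin K ΦF * I ≤ IK ∧ IK ≤ kmax K ΦF * I := by
  classical
  -- the clamp to [0,1]
  set cl : ℝ → ℝ := fun x => min 1 (max 0 x) with hcldef
  have clmem : ∀ x, cl x ∈ Icc (0:ℝ) 1 := fun x =>
    ⟨le_min zero_le_one (le_max_left 0 x), min_le_left _ _⟩
  have clid : ∀ x ∈ Icc (0:ℝ) 1, cl x = x := by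
    intro x hx
    rw [hcldef]
    dsimp only
    rw [max_eq_right hx.1, min_eq_right hx.2]
  have clmono : Monotone cl := fun a b h =>
    min_le_min le_rfl (max_le_max le_rfl h)
  have clcont : Continuous cl := continuous_const.min (continuous_const.max continuous_id)
  -- the extended functions
  set Qt₁ : ℝ → ℝ := fun x => Q₁ (cl x) with hQt₁def
  set Qt₂ : ℝ → ℝ := fun x => Q₂ (cl x) with hQt₂def
  set qt₁ : ℝ → ℝ := fun x => derivWithin Q₁ (Icc 0 1) (cl x) with hqt₁def
  set qt₂ : ℝ → ℝ := fun x => derivWithin Q₂ (Icc 0 1) (cl x) with hqt₂def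
  have hq₁cOn : ContinuousOn (derivWithin Q₁ (Icc 0 1)) (Icc 0 1) :=
    h1.continuousOn_derivWithin (uniqueDiffOn_Icc one_pos) le_rfl
  have hq₂cOn : ContinuousOn (derivWithin Q₂ (Icc 0 1)) (Icc 0 1) :=
    h2.continuousOn_derivWithin (uniqueDiffOn_Icc one_pos) le_rfl
  have hqt₁c : Continuous qt₁ := hq₁cOn.comp_continuous clcont clmem
  have hqt₂c : Continuous qt₂ := hq₂cOn.comp_continuous clcont clmem
  have hQt₁c : Continuous Qt₁ := h1.continuousOn.comp_continuous clcont clmem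
  have hQt₂c : Continuous Qt₂ := h2.continuousOn.comp_continuous clcont clmem
  have hQt₁m : Monotone Qt₁ := fun a b h => m1 (clmem a) (clmem b) (clmono h)
  have hQt₂m : Monotone Qt₂ := fun a b h => m2 (clmem a) (clmem b) (clmono h)
  have h0mem : (0:ℝ) ∈ Icc (0:ℝ) 1 := ⟨le_rfl, zero_le_one⟩
  have h1mem : (1:ℝ) ∈ Icc (0:ℝ) 1 := ⟨zero_le_one, le_rfl⟩
  have hQt₁0 : Qt₁ 0 = 0 := by rw [hQt₁def]; dsimp only; rw [clid 0 h0mem, b10]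
  have hQt₂0 : Qt₂ 0 = 0 := by rw [hQt₂def]; dsimp only; rw [clid 0 h0mem, b20]
  have hQt₁1 : Qt₁ 1 = ΦF := by rw [hQt₁def]; dsimp only; rw [clid 1 h1mem, b11]
  have hQt₂1 : Qt₂ 1 = ΦF := by rw [hQt₂def]; dsimp only; rw [clid 1 h1mem, b21]
  have hqt₁0 : ∀ x, 0 ≤ qt₁ x := fun x => derivWithin_nonneg_of_monotoneOn h1 m1 (clmem x)
  have hqt₂0 : ∀ x, 0 ≤ qt₂ x := fun x => derivWithin_nonneg_of_monotoneOn h2 m2 (clmem x)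
  obtain ⟨M₁, hM₁⟩ : ∃ M, ∀ x, |qt₁ x| ≤ M := by
    obtain ⟨M, hM⟩ := isCompact_Icc.exists_bound_of_continuousOn hq₁cOn
    exact ⟨M, fun x => by simpa using hM _ (clmem x)⟩
  obtain ⟨M₂, hM₂⟩ : ∃ M, ∀ x, |qt₂ x| ≤ M := by
    obtain ⟨M, hM⟩ := isCompact_Icc.exists_bound_of_continuousOn hq₂cOn
    exact ⟨M, fun x => by simpa using hM _ (clmem x)⟩
  have hFTC1 : ∀ a b : ℝ, 0 ≤ a → a ≤ b → b ≤ 1 →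
      (∫ x in a..b, qt₁ x) = Qt₁ b - Qt₁ a := by
    intro a b ha hab hb
    have h' : (∫ x in a..b, qt₁ x) = ∫ x in a..b, derivWithin Q₁ (Icc 0 1) x := by
      apply intervalIntegral.integral_congr
      intro x hx
      rw [uIcc_of_le hab] at hx
      rw [hqt₁def]
      dsimp only
      rw [clid x ⟨ha.trans hx.1, hx.2.trans hb⟩]
    rw [h', ftcQ h1 ha hab hb, hQt₁def]
    dsimp only
    rw [clid a ⟨ha, hab.trans hb⟩, clid b ⟨ha.trans hab, hb⟩]
  have hFTC2 : ∀ a b : ℝ, 0 ≤ a → a ≤ b → b ≤ 1 →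
      (∫ x in a..b, qt₂ x) = Qt₂ b - Qt₂ a := by
    intro a b ha hab hb
    have h' : (∫ x in a..b, qt₂ x) = ∫ x in a..b, derivWithin Q₂ (Icc 0 1) x := by
      apply intervalIntegral.integral_congr
      intro x hx
      rw [uIcc_of_le hab] at hx
      rw [hqt₂def]
      dsimp only
      rw [clid x ⟨ha.trans hx.1, hx.2.trans hb⟩]
    rw [h', ftcQ h2 ha hab hb, hQt₂def]
    dsimp only
    rw [clid a ⟨ha, hab.trans hb⟩, clid b ⟨ha.trans hab, hb⟩]
  -- facts about K
  have hKd : Differentiable ℝ K := hK.smooth.differentiable (by norm_num)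
  have hK1 : ContDiff ℝ 1 (deriv K) := by
    have h2' : ContDiff ℝ (1 + 1 : ℕ) K := by exact_mod_cast hK.smooth
    exact ((contDiff_succ_iff_deriv (n := 1)).mp (by exact_mod_cast h2')).2.2
  have hK1d : Differentiable ℝ (deriv K) := hK1.differentiable one_ne_zero
  set K2 : ℝ → ℝ := deriv (deriv K) with hK2def
  have hK2c : Continuous K2 := hK1.continuous_deriv le_rfl
  obtain ⟨C2, hC2⟩ := hK.bdd2
  have gFTC : ∀ x : ℝ, deriv K x = deriv K 0 + ∫ φ in (0:ℝ)..x, K2 φ := by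
    intro x
    have h' := intervalIntegral.integral_deriv_eq_sub (f := deriv K)
      (fun t _ => hK1d t) (hK2c.intervalIntegrable 0 x)
    rw [hK2def, h']
    ring
  -- rewrite I
  set Ival : ℝ := ∫ η in (0:ℝ)..1, |qt₁ η - qt₂ η| with hIvdef
  have hIeq : I = Ival := by
    rw [hI, hIvdef]
    apply intervalIntegral.integral_congr
    intro η hη
    rw [uIcc_of_le zero_le_one] at hη
    rw [hqt₁def, hqt₂def]
    dsimp only
    rw [clid η hη]
  -- the second-order term
  set S : ℝ := ∫ η in (0:ℝ)..1, ((∫ φ in (0:ℝ)..Qt₁ η, K2 φ) * qt₁ η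
      - (∫ φ in (0:ℝ)..Qt₂ η, K2 φ) * qt₂ η) * Real.sign (qt₁ η - qt₂ η) with hSdef
  -- derivative identity
  have hder : ∀ η ∈ Icc (0:ℝ) 1,
      derivWithin (fun x => K (Q₁ x) - K (Q₂ x)) (Icc 0 1) η
        = deriv K (Q₁ η) * derivWithin Q₁ (Icc 0 1) η
          - deriv K (Q₂ η) * derivWithin Q₂ (Icc 0 1) η := by
    intro η hη
    have hd1 : HasDerivWithinAt Q₁ (derivWithin Q₁ (Icc 0 1) η) (Icc 0 1) η :=
      (h1.differentiableOn one_ne_zero η hη).hasDerivWithinAt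
    have hd2 : HasDerivWithinAt Q₂ (derivWithin Q₂ (Icc 0 1) η) (Icc 0 1) η :=
      (h2.differentiableOn one_ne_zero η hη).hasDerivWithinAt
    have hc1 : HasDerivWithinAt (fun x => K (Q₁ x))
        (deriv K (Q₁ η) * derivWithin Q₁ (Icc 0 1) η) (Icc 0 1) η :=
      (hKd (Q₁ η)).hasDerivAt.comp_hasDerivWithinAt η hd1
    have hc2 : HasDerivWithinAt (fun x => K (Q₂ x))
        (deriv K (Q₂ η) * derivWithin Q₂ (Icc 0 1) η) (Icc 0 1) η :=
      (hKd (Q₂ η)).hasDerivAt.comp_hasDerivWithinAt η hd2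
    exact (hc1.sub hc2).derivWithin (uniqueDiffOn_Icc one_pos η hη)
  -- integrability of the two parts
  have hG1c : Continuous (fun η => (deriv K (Qt₁ η) - deriv K 0) * qt₁ η) :=
    (((hK1.continuous).comp hQt₁c).sub continuous_const).mul hqt₁c
  have hG2c : Continuous (fun η => (deriv K (Qt₂ η) - deriv K 0) * qt₂ η) :=
    (((hK1.continuous).comp hQt₂c).sub continuous_const).mul hqt₂c
  have hprim1 : ∀ η, (∫ φ in (0:ℝ)..Qt₁ η, K2 φ) = deriv K (Qt₁ η) - deriv K 0 := by
    intro η; rw [gFTC (Qt₁ η)]; ring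
  have hprim2 : ∀ η, (∫ φ in (0:ℝ)..Qt₂ η, K2 φ) = deriv K (Qt₂ η) - deriv K 0 := by
    intro η; rw [gFTC (Qt₂ η)]; ring
  have hsm : Measurable (fun η => Real.sign (qt₁ η - qt₂ η)) :=
    measurable_sign_comp (hqt₁c.sub hqt₂c).measurable
  have hf₂II : ∀ a b : ℝ, IntervalIntegrable (fun η =>
      ((∫ φ in (0:ℝ)..Qt₁ η, K2 φ) * qt₁ η - (∫ φ in (0:ℝ)..Qt₂ η, K2 φ) * qt₂ η)
        * Real.sign (qt₁ η - qt₂ η)) volume a b := by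
    intro a b
    have heq : (fun η =>
        ((∫ φ in (0:ℝ)..Qt₁ η, K2 φ) * qt₁ η - (∫ φ in (0:ℝ)..Qt₂ η, K2 φ) * qt₂ η)
          * Real.sign (qt₁ η - qt₂ η)) = (fun η =>
        ((deriv K (Qt₁ η) - deriv K 0) * qt₁ η - (deriv K (Qt₂ η) - deriv K 0) * qt₂ η)
          * Real.sign (qt₁ η - qt₂ η)) := by
      funext η; rw [hprim1 η, hprim2 η]
    rw [heq]
    apply II_of_bound ((hG1c.sub hG2c).measurable.mul hsm)
      ((hG1c.sub hG2c).abs)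
    intro x
    show |((deriv K (Qt₁ x) - deriv K 0) * qt₁ x - (deriv K (Qt₂ x) - deriv K 0) * qt₂ x)
      * Real.sign (qt₁ x - qt₂ x)|
      ≤ |(deriv K (Qt₁ x) - deriv K 0) * qt₁ x - (deriv K (Qt₂ x) - deriv K 0) * qt₂ x|
    rw [abs_mul]
    calc |(deriv K (Qt₁ x) - deriv K 0) * qt₁ x - (deriv K (Qt₂ x) - deriv K 0) * qt₂ x|
          * |Real.sign (qt₁ x - qt₂ x)|
        ≤ |(deriv K (Qt₁ x) - deriv K 0) * qt₁ x - (deriv K (Qt₂ x) - deriv K 0) * qt₂ x|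
          * 1 := mul_le_mul_of_nonneg_left (abs_sign_le _) (abs_nonneg _)
      _ = _ := mul_one _
  -- splitting IK
  have hIKeq : IK = deriv K 0 * Ival + S := by
    rw [hIK]
    have hcongr : (∫ η in (0:ℝ)..1,
        derivWithin (fun x => K (Q₁ x) - K (Q₂ x)) (Icc 0 1) η *
          Real.sign (derivWithin Q₁ (Icc 0 1) η - derivWithin Q₂ (Icc 0 1) η))
        = ∫ η in (0:ℝ)..1, (deriv K 0 * |qt₁ η - qt₂ η|
            + ((∫ φ in (0:ℝ)..Qt₁ η, K2 φ) * qt₁ η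
              - (∫ φ in (0:ℝ)..Qt₂ η, K2 φ) * qt₂ η) * Real.sign (qt₁ η - qt₂ η)) := by
      apply intervalIntegral.integral_congr
      intro η hη
      rw [uIcc_of_le zero_le_one] at hη
      have hclη : cl η = η := clid η hη
      dsimp only
      rw [hder η hη]
      simp only [hqt₁def, hqt₂def, hQt₁def, hQt₂def]
      rw [hclη, ← mul_sign_self (derivWithin Q₁ (Icc 0 1) η - derivWithin Q₂ (Icc 0 1) η),
        gFTC (Q₁ η), gFTC (Q₂ η)]
      ring
    rw [hcongr, intervalIntegral.integral_add (f := fun η => deriv K 0 * |qt₁ η - qt₂ η|)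
      (((continuous_const.mul (hqt₁c.sub hqt₂c).abs)).intervalIntegrable 0 1) (hf₂II 0 1),
      intervalIntegral.integral_const_mul, hSdef, hIvdef]
  -- apply the core estimate
  have hC2' : ∀ x, |K2 x| ≤ C2 := hC2
  have hmain := lemB ΦF hΦF K2 hK2c C2 hC2' Qt₁ Qt₂ qt₁ qt₂ hQt₁c hQt₂c hqt₁c hqt₂c
    hQt₁m hQt₂m hQt₁0 hQt₂0 hQt₁1 hQt₂1 hqt₁0 hqt₂0 M₁ M₂ hM₁ hM₂ hFTC1 hFTC2
  rw [← hIvdef, ← hSdef] at hmain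
  have hkmin : kmin K ΦF = deriv K 0 + ∫ φ in (0:ℝ)..ΦF, min (K2 φ) 0 := rfl
  have hkmax : kmax K ΦF = deriv K 0 + ∫ φ in (0:ℝ)..ΦF, max (K2 φ) 0 := rfl
  constructor
  · rw [hkmin, hIKeq, hIeq]
    nlinarith [hmain.1]
  · rw [hkmax, hIKeq, hIeq]
    nlinarith [hmain.2]
end
end
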